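/- arXiv:2601.02100 — 4 statements merged into one kernel-verified Lean document; each statement's English description precedes it below -/
import Mathlib

section
/- Every Hausdorff left-continuous topology on the semigroup C₋(a,b) (i.e., every Hausdorff topology on C₋(a,b) making all right translations x ↦ x·s continuous) for which C₋(a,b) is locally compact is the discrete topology. -/
/-- The bicyclic monoid realized on ℕ × ℕ, where `(k, l)` represents `q^k p^l`:
`(k,l)·(m,n) = (k + m − min(l,m), n + l − min(l,m))`. -/
def bmul (x y : ℕ × ℕ) : ℕ × ℕ :=
  (x.1 + y.1 - min x.2 y.1, y.2 + x.2 - min x.2 y.1)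

/-- The subsemigroup `C₋(a,b) = {(i,j) : i ≥ j}` of the bicyclic monoid. -/
def Cminus : Set (ℕ × ℕ) := {x | x.2 ≤ x.1}

lemma Cminus.mul_mem {x y : ℕ × ℕ} (hx : x ∈ Cminus) (hy : y ∈ Cminus) :
    bmul x y ∈ Cminus := by
  simp only [Cminus, Set.mem_setOf_eq, bmul] at *
  omega

/-!
Right multiplication by the idempotent `(n, n)` fixes exactly the points with second coordinate
`≥ n`, so in a Hausdorff left-continuous topology the sets `{x | x.2 ≤ n}` are open. If a point
`a` were not isolated, right multiplication by `(a.2, a.2)` would push the nearby points onto the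
ray `{(i, a.2) | i ≥ a.1}` and make `a` an accumulation point of it; right multiplications also
translate the ray along itself, so the whole ray is dense-in-itself. Its closure is then a
countable, nonempty, locally compact Hausdorff space without isolated points, which the Baire
category theorem forbids.
-/

open Filter Topology Set

theorem AccPt.of_continuousAt_of_eventually {X Y : Type*} [TopologicalSpace X]
    [TopologicalSpace Y] {x : X} {F : Filter X} (h : AccPt x F) {f : X → Y}
    (hf : ContinuousAt f x) {T : Set Y} (hT : ∀ᶠ y in 𝓝[≠] x ⊓ F, f y ∈ T \ {f x}) :
    AccPt (f x) (𝓟 T) := by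
  rw [accPt_principal_iff_nhdsWithin]
  have : (𝓝[≠] x ⊓ F).NeBot := h
  exact (tendsto_nhdsWithin_iff.2
    ⟨hf.tendsto.mono_left (inf_le_left.trans nhdsWithin_le_nhds), hT⟩).neBot

theorem Preperfect.eq_empty {X : Type*} [TopologicalSpace X] [T2Space X]
    [WeaklyLocallyCompactSpace X] [Countable X] {C : Set X} (hC : Preperfect C) : C = ∅ := by
  have hD : Perfect (closure C) := hC.perfect_closure
  have : LocallyCompactSpace (closure C) := hD.closed.locallyCompactSpace
  by_contra hne
  have : Nonempty (closure C) := (nonempty_iff_ne_empty.2 hne).closure.to_subtype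
  obtain ⟨y, z, hz⟩ := nonempty_interior_of_iUnion_of_closed
    (fun y : closure C => isClosed_singleton) (iUnion_of_singleton _)
  obtain rfl : z = y := mem_singleton_iff.1 (interior_subset hz)
  obtain ⟨U, hU, hUz⟩ := (mem_nhds_subtype _ _ _).1 (mem_interior_iff_mem_nhds.1 hz)
  obtain ⟨w, ⟨hwU, hwC⟩, hwz⟩ := accPt_iff_nhds.1 (hD.acc z z.2) U hU
  exact hwz (congrArg Subtype.val (hUz (show (⟨w, hwC⟩ : closure C) ∈ _ from hwU)))

namespace Cminus

def mulRight (s x : Cminus) : Cminus := ⟨bmul x s, Cminus.mul_mem x.2 s.2⟩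

/-- The idempotents of `C₋(a,b)` are the elements `mk 0 n`. -/
def mk (k n : ℕ) : Cminus := ⟨(k + n, n), Nat.le_add_left n k⟩

theorem mulRight_mk_zero_eq_self_iff {n : ℕ} {x : Cminus} :
    mulRight (mk 0 n) x = x ↔ n ≤ x.val.2 := by
  have hx : x.val.2 ≤ x.val.1 := x.2
  simp only [mulRight, mk, bmul, Subtype.ext_iff, Prod.ext_iff]
  omega

theorem mulRight_mk_zero_of_snd_le {n : ℕ} {x : Cminus} (hx : x.val.2 ≤ n) :
    (mulRight (mk 0 n) x).val = (x.val.1 + n - x.val.2, n) := by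
  simp only [mulRight, mk, bmul, Prod.ext_iff]
  omega

theorem mulRight_mk_of_snd_eq {k n : ℕ} {x : Cminus} (hx : x.val.2 = n) :
    (mulRight (mk k n) x).val = (x.val.1 + k, n) := by
  simp only [mulRight, mk, bmul, Prod.ext_iff]
  omega

def ray (a : Cminus) : Set Cminus := {x | x.val.2 = a.val.2 ∧ a.val.1 ≤ x.val.1}

theorem mem_ray_self (a : Cminus) : a ∈ ray a := ⟨rfl, le_rfl⟩

theorem ray_subset_ray {a w : Cminus} (hw : w ∈ ray a) : ray w ⊆ ray a :=
  fun _ hx => ⟨hx.1.trans hw.1, hw.2.trans hx.2⟩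

theorem finite_setOf_le (a : Cminus) : {x : Cminus | x.val ≤ a.val}.Finite :=
  (finite_Iic a.val).preimage Subtype.val_injective.injOn

variable [TopologicalSpace Cminus]

theorem isOpen_setOf_snd_le [T2Space Cminus] (hright : ∀ s, Continuous (mulRight s)) (n : ℕ) :
    IsOpen {x : Cminus | x.val.2 ≤ n} := by
  have hfix : {x : Cminus | n + 1 ≤ x.val.2} = Function.fixedPoints (mulRight (mk 0 (n + 1))) :=
    Set.ext fun x => mulRight_mk_zero_eq_self_iff.symm
  have hcl : IsClosed {x : Cminus | n + 1 ≤ x.val.2} := hfix ▸ isClosed_fixedPoints (hright _)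
  simpa only [compl_ofPred, not_le, Nat.lt_succ_iff] using hcl.isOpen_compl

theorem accPt_ray_self [T2Space Cminus] (hright : ∀ s, Continuous (mulRight s)) {a : Cminus}
    (ha : ¬IsOpen ({a} : Set Cminus)) : AccPt a (𝓟 (ray a)) := by
  have hfa : mulRight (mk 0 a.val.2) a = a := mulRight_mk_zero_eq_self_iff.2 le_rfl
  have hne : (𝓝[≠] a).NeBot := ⟨mt (isOpen_singleton_iff_punctured_nhds a).2 ha⟩
  have haT : AccPt a ⊤ := by rwa [AccPt, inf_top_eq]
  rw [← hfa]
  refine haT.of_continuousAt_of_eventually (hright _).continuousAt ?_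
  rw [inf_top_eq, hfa]
  have hsnd : {x : Cminus | x.val.2 ≤ a.val.2} ∈ 𝓝[≠] a :=
    mem_nhdsWithin_of_mem_nhds ((isOpen_setOf_snd_le hright _).mem_nhds (le_refl a.val.2))
  have hbelow : ({x : Cminus | x.val ≤ a.val} \ {a})ᶜ ∈ 𝓝[≠] a :=
    mem_nhdsWithin_of_mem_nhds (((finite_setOf_le a).sdiff).isClosed.compl_mem_nhds
      fun h => h.2 rfl)
  -- Near `a`, points have second coordinate `≤ a.2` and, off a finite set, first coordinate
  -- `> a.1`; the idempotent `mk 0 a.2` moves them onto the ray, away from `a`.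
  filter_upwards [hsnd, hbelow, self_mem_nhdsWithin] with x hx2 hxa hx
  have hx1 : a.val.1 < x.val.1 := by
    by_contra! h
    exact hxa ⟨Prod.mk_le_mk.2 ⟨h, hx2⟩, hx⟩
  have hfx := mulRight_mk_zero_of_snd_le hx2
  have hray : mulRight (mk 0 a.val.2) x ∈ ray a := by
    simp only [ray, mem_ofPred_eq, hfx, true_and]
    omega
  refine ⟨hray, fun h => ?_⟩
  have := congrArg (fun y : Cminus => y.val.1) h
  simp only [hfx] at this
  omega

theorem accPt_ray_of_mem_ray (hright : ∀ s, Continuous (mulRight s)) {a w : Cminus}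
    (ha : AccPt a (𝓟 (ray a))) (hw : w ∈ ray a) : AccPt w (𝓟 (ray w)) := by
  obtain ⟨hw2, hw1⟩ := hw
  have hfa : mulRight (mk (w.val.1 - a.val.1) a.val.2) a = w := by
    have := mulRight_mk_of_snd_eq (k := w.val.1 - a.val.1) (x := a) rfl
    ext <;> simp only [this] <;> omega
  rw [← hfa]
  refine ha.of_continuousAt_of_eventually (hright _).continuousAt ?_
  filter_upwards [mem_inf_of_right (mem_principal_self _),
    mem_inf_of_left self_mem_nhdsWithin] with x hxa hx
  obtain ⟨hx2, hx1⟩ := hxa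
  have hfx := mulRight_mk_of_snd_eq (k := w.val.1 - a.val.1) hx2
  rw [hfa]
  have hray : mulRight (mk (w.val.1 - a.val.1) a.val.2) x ∈ ray w := by
    simp only [ray, mem_ofPred_eq, hfx]
    omega
  refine ⟨hray, fun h => hx (Subtype.ext (Prod.ext ?_ hx2))⟩
  have := congrArg (fun y : Cminus => y.val.1) h
  simp only [hfx] at this
  omega

theorem preperfect_ray [T2Space Cminus] (hright : ∀ s, Continuous (mulRight s)) {a : Cminus}
    (ha : ¬IsOpen ({a} : Set Cminus)) : Preperfect (ray a) := fun _ hw =>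
  (accPt_ray_of_mem_ray hright (accPt_ray_self hright ha) hw).mono
    (principal_mono.2 (ray_subset_ray hw))

end Cminus

/-- Every Hausdorff left-continuous topology on `C₋(a,b)` (all right translations
continuous) which is locally compact (every point has an open neighbourhood with compact
closure) is discrete. -/
theorem Cminus_discrete_of_leftContinuous_of_locallyCompact
    (t : TopologicalSpace Cminus)
    (ht2 : @T2Space Cminus t)
    (hLC : ∀ x : Cminus, ∃ U : Set Cminus,
      @IsOpen Cminus t U ∧ x ∈ U ∧ @IsCompact Cminus t (@closure Cminus t U))
    (hright : ∀ s : Cminus, @Continuous Cminus Cminus t t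
      (fun x => ⟨bmul (x : ℕ × ℕ) (s : ℕ × ℕ), Cminus.mul_mem x.2 s.2⟩)) :
    t = ⊥ := by
  let _ := t
  have : WeaklyLocallyCompactSpace Cminus := ⟨fun x => by
    obtain ⟨U, hUo, hxU, hUc⟩ := hLC x
    exact ⟨closure U, hUc, mem_of_superset (hUo.mem_nhds hxU) subset_closure⟩⟩
  refine eq_bot_of_singletons_open fun a => ?_
  by_contra ha
  have hempty : Cminus.ray a = ∅ := (Cminus.preperfect_ray hright ha).eq_empty
  exact hempty.subset (Cminus.mem_ray_self a)
end

section
/- Every Hausdorff left-continuous topology on the bicyclic monoid C(a,b) (i.e., every Hausdorff topology on ℕ × ℕ making all right translations x ↦ x·s of the bicyclic multiplication continuous) for which the space is Baire is the discrete topology. -/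
section Topology

variable {X : Type*} [TopologicalSpace X] [T1Space X]

theorem dense_setOf_isOpen_singleton [BaireSpace X] [Countable X] :
    Dense {x : X | IsOpen {x}} := by
  have hdense : Dense (⋂ x ∈ {x : X | ¬IsOpen {x}}, ({x}ᶜ : Set X)) :=
    dense_biInter_of_isOpen (fun _ _ ↦ isOpen_compl_singleton) (Set.to_countable _)
      fun _ hx ↦ dense_compl_singleton_iff_not_open.2 hx
  refine hdense.mono fun y hy ↦ ?_
  by_contra hy'
  exact Set.mem_iInter₂.1 hy y hy' rfl

theorem isOpen_singleton_of_continuous_of_finite_fiber {Y : Type*} [TopologicalSpace Y]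
    {f : X → Y} (hf : Continuous f) {x : X} (hfin : (f ⁻¹' {f x}).Finite)
    (hfx : IsOpen {f x}) : IsOpen {x} :=
  isOpen_singleton_of_finite_mem_nhds x ((hfx.preimage hf).mem_nhds rfl) hfin

end Topology

namespace Bicyclic

theorem bmul_eq_self_iff (x : ℕ × ℕ) : bmul x (1, 1) = x ↔ x.2 ≠ 0 := by
  obtain ⟨a, b⟩ := x
  simp only [bmul, Prod.mk.injEq]
  omega

theorem bmul_shift {m k : ℕ} (hmk : m ≤ k) (n : ℕ) : bmul (m, n) (k - m + n, 0) = (k, 0) := by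
  simp only [bmul, Prod.mk.injEq]
  omega

theorem finite_setOf_bmul_eq (s t : ℕ × ℕ) : {x | bmul x s = t}.Finite := by
  refine ((Set.finite_Iic t.1).prod (Set.finite_Iic (t.2 + s.1))).subset ?_
  rintro ⟨a, b⟩ h
  simp only [Set.mem_ofPred_eq, bmul] at h
  simp only [Set.mem_prod, Set.mem_Iic, ← h]
  omega

variable [TopologicalSpace (ℕ × ℕ)]

theorem isOpen_setOf_snd_eq_zero [T2Space (ℕ × ℕ)]
    (hright : ∀ s : ℕ × ℕ, Continuous fun x ↦ bmul x s) :
    IsOpen {x : ℕ × ℕ | x.2 = 0} := by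
  have hfix : IsClosed {x : ℕ × ℕ | bmul x (1, 1) = x} :=
    isClosed_eq (hright (1, 1)) continuous_id
  simp only [bmul_eq_self_iff] at hfix
  simpa only [Set.compl_ofPred, not_not] using hfix.isOpen_compl

theorem exists_isOpen_singleton_of_le [T2Space (ℕ × ℕ)] [BaireSpace (ℕ × ℕ)]
    (hright : ∀ s : ℕ × ℕ, Continuous fun x ↦ bmul x s) (m : ℕ) :
    ∃ k, m ≤ k ∧ IsOpen ({(k, 0)} : Set (ℕ × ℕ)) := by
  have hU : IsOpen ({x : ℕ × ℕ | x.2 = 0} \ Set.Iio m ×ˢ {0}) :=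
    (isOpen_setOf_snd_eq_zero hright).sdiff
      ((Set.finite_Iio m).prod (Set.finite_singleton 0)).isClosed
  obtain ⟨⟨k, l⟩, ⟨hl, hkl⟩, hiso⟩ :=
    dense_setOf_isOpen_singleton.inter_open_nonempty _ hU ⟨(m, 0), by simp⟩
  simp only [Set.mem_ofPred_eq] at hl
  subst hl
  exact ⟨k, by simpa using hkl, hiso⟩

theorem isOpen_singleton_of_le [T1Space (ℕ × ℕ)] {m k : ℕ} (hmk : m ≤ k) (n : ℕ)
    (hright : Continuous fun x ↦ bmul x (k - m + n, 0))
    (hk : IsOpen ({(k, 0)} : Set (ℕ × ℕ))) :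
    IsOpen ({(m, n)} : Set (ℕ × ℕ)) := by
  refine isOpen_singleton_of_continuous_of_finite_fiber hright ?_ ?_ <;>
    rw [bmul_shift hmk]
  exacts [finite_setOf_bmul_eq _ _, hk]

end Bicyclic

open Bicyclic in
/-- Every Hausdorff left-continuous topology on the bicyclic monoid (all right
translations continuous) which is a Baire space is discrete. -/
theorem bicyclic_discrete_of_leftContinuous_of_baire
    (t : TopologicalSpace (ℕ × ℕ))
    (ht2 : @T2Space (ℕ × ℕ) t)
    (hBaire : @BaireSpace (ℕ × ℕ) t)
    (hright : ∀ s : ℕ × ℕ, @Continuous (ℕ × ℕ) (ℕ × ℕ) t t (fun x => bmul x s)) :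
    t = ⊥ := by
  refine eq_bot_of_singletons_open fun ⟨m, n⟩ ↦ ?_
  obtain ⟨k, hmk, hk⟩ := exists_isOpen_singleton_of_le hright m
  exact isOpen_singleton_of_le hmk n (hright _) hk
end

section
/- Every Hausdorff topology on the bicyclic monoid C(a,b) that is locally compact and either right-continuous (all left translations x ↦ s·x continuous) or left-continuous (all right translations x ↦ x·s continuous) is the discrete topology. -/
/-! The isolated points of a countable locally compact Hausdorff space are dense (Baire). Left
translations have finite fibres, and `(u, v)` lies in a fibre over `(k, l)` as soon as `v ≤ l`;
so if left translations are continuous, every point below an isolated point is isolated. If some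
`z` were not isolated, all isolated points would lie in the strip `ℕ × [0, z.2)`, and infinitely
many of them in a compact neighbourhood of `z`. Their cluster point `w` is moved by the idempotent
`(j, j)`, `j = w.1 + 1`, which fixes every point of the strip to the right of `j`: this contradicts
continuity of `x ↦ (j, j)·x` at `w`. Right translations reduce to left ones via the
anti-automorphism `(k, l) ↦ (l, k)`. -/

open Filter Set Topology

theorem IsOpen.exists_isOpen_singleton_mem {X : Type*} [TopologicalSpace X] [BaireSpace X]
    [T1Space X] [Countable X] {O : Set X} (hO : IsOpen O) (hne : O.Nonempty) :
    ∃ x ∈ O, IsOpen ({x} : Set X) := by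
  by_contra! h
  have hdense : Dense (⋂ x ∈ O, ({x}ᶜ : Set X)) :=
    dense_biInter_of_isOpen (fun _ _ => isOpen_compl_singleton) O.to_countable
      fun x hx => dense_compl_singleton_iff_not_open.2 (h x hx)
  rw [← compl_iUnion₂, biUnion_of_singleton] at hdense
  obtain ⟨x, hxO, hxO'⟩ := hdense.inter_open_nonempty O hO hne
  exact hxO' hxO

namespace Bicyclic

theorem bmul_swap (x y : ℕ × ℕ) : bmul x.swap y.swap = (bmul y x).swap := by
  simp only [bmul, Prod.swap, Prod.mk.injEq]
  omega

theorem bmul_diag_eq_self_iff (j : ℕ) (x : ℕ × ℕ) : bmul (j, j) x = x ↔ j ≤ x.1 := by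
  simp only [bmul, Prod.ext_iff]
  omega

theorem finite_preimage_bmul_singleton (s y : ℕ × ℕ) : (bmul s ⁻¹' {y}).Finite := by
  refine ((finite_Iic (s.2 + y.1)).prod (finite_Iic y.2)).subset fun x hx => ?_
  simp only [mem_preimage, mem_singleton_iff, bmul, Prod.ext_iff] at hx
  simp only [mem_prod, mem_Iic]
  omega

theorem isOpen_singleton_of_snd_le [TopologicalSpace (ℕ × ℕ)] [T1Space (ℕ × ℕ)]
    (hcont : ∀ s, Continuous (bmul s)) {x y : ℕ × ℕ} (hy : IsOpen ({y} : Set _))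
    (hxy : x.2 ≤ y.2) : IsOpen ({x} : Set _) := by
  let s : ℕ × ℕ := (y.1, y.2 + x.1 - x.2)
  have hsx : bmul s x = y := by
    simp only [s, bmul, Prod.ext_iff]
    omega
  exact isOpen_singleton_of_finite_mem_nhds x
    ((hy.preimage (hcont s)).mem_nhds hsx) (finite_preimage_bmul_singleton s y)

theorem finite_of_subset_isCompact_of_forall_snd_lt [TopologicalSpace (ℕ × ℕ)]
    [T2Space (ℕ × ℕ)] (hcont : ∀ s, Continuous (bmul s)) {K S : Set (ℕ × ℕ)}
    (hK : IsCompact K) (hSK : S ⊆ K) {n : ℕ} (hSn : ∀ x ∈ S, x.2 < n) : S.Finite := by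
  by_contra hS
  have : (cofinite ⊓ 𝓟 S).NeBot := cofinite_inf_principal_neBot_iff.2 hS
  obtain ⟨w, -, hw⟩ :=
    hK.exists_clusterPt (f := cofinite ⊓ 𝓟 S) (inf_le_right.trans (principal_mono.2 hSK))
  let j := w.1 + 1
  have hew : bmul (j, j) w ≠ w := by
    rw [Ne, bmul_diag_eq_self_iff]
    omega
  obtain ⟨O₁, O₂, hO₁, hO₂, hwO₁, hewO₂, hO⟩ := t2_separation hew.symm
  have hN : O₁ ∩ bmul (j, j) ⁻¹' O₂ ∈ 𝓝 w :=
    (hO₁.inter (hO₂.preimage (hcont (j, j)))).mem_nhds ⟨hwO₁, hewO₂⟩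
  have hF : ({x : ℕ × ℕ | x.1 < j ∧ x.2 < n}).Finite :=
    ((finite_Iio j).prod (finite_Iio n)).subset fun x hx => hx
  obtain ⟨x, ⟨hxO₁, hxO₂⟩, hxF, hxS⟩ :=
    clusterPt_iff_nonempty.1 hw hN (inter_mem_inf hF.compl_mem_cofinite (mem_principal_self S))
  have hex : bmul (j, j) x = x := by
    rw [bmul_diag_eq_self_iff]
    by_contra! hxj
    exact hxF ⟨hxj, hSn x hxS⟩
  rw [mem_preimage, hex] at hxO₂
  exact disjoint_left.1 hO hxO₁ hxO₂

theorem eq_bot_of_continuous_bmul_left [t : TopologicalSpace (ℕ × ℕ)] [T2Space (ℕ × ℕ)]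
    [WeaklyLocallyCompactSpace (ℕ × ℕ)] (hcont : ∀ s, Continuous (bmul s)) : t = ⊥ := by
  refine eq_bot_of_singletons_open fun z => ?_
  by_contra hz
  have hstrip : ∀ x : ℕ × ℕ, IsOpen ({x} : Set _) → x.2 < z.2 := fun x hx => by
    by_contra! hzx
    exact hz (isOpen_singleton_of_snd_le hcont hx hzx)
  obtain ⟨K, hK, hzK⟩ := exists_compact_mem_nhds z
  let S := {x ∈ interior K | IsOpen ({x} : Set _)}
  have hS : S.Finite := finite_of_subset_isCompact_of_forall_snd_lt hcont hK
    (fun x hx => interior_subset hx.1) fun x hx => hstrip x hx.2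
  obtain ⟨x, ⟨hxK, hxS⟩, hx⟩ :=
    (isOpen_interior.inter hS.isClosed.isOpen_compl).exists_isOpen_singleton_mem
      ⟨z, mem_interior_iff_mem_nhds.2 hzK, hz ∘ And.right⟩
  exact hxS ⟨hxK, hx⟩

theorem eq_bot_of_continuous_bmul_right [t : TopologicalSpace (ℕ × ℕ)] [T2Space (ℕ × ℕ)]
    [WeaklyLocallyCompactSpace (ℕ × ℕ)] (hcont : ∀ s, Continuous (bmul · s)) : t = ⊥ := by
  let e := Equiv.prodComm ℕ ℕ
  have hemb : @IsEmbedding _ _ (t.induced e) t e :=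
    @IsEmbedding.mk _ _ (t.induced e) t e (IsInducing.induced e) e.injective
  have he : @IsClosedEmbedding _ _ (t.induced e) t e :=
    @IsClosedEmbedding.mk _ _ (t.induced e) t e hemb (by simp)
  have hcont' : ∀ s, Continuous[t.induced e, t.induced e] (bmul s) := fun s => by
    refine continuous_induced_rng.2 ?_
    have : e ∘ bmul s = (bmul · s.swap) ∘ e := funext fun x => by
      simp [e, ← bmul_swap]
    rw [this]
    exact @Continuous.comp _ _ _ (t.induced e) t t _ _ (hcont s.swap) continuous_induced_dom
  have ht' : t.induced e = ⊥ :=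
    @eq_bot_of_continuous_bmul_left (t.induced e)
      (@IsEmbedding.t2Space _ _ (t.induced e) t _ e hemb)
      (@IsClosedEmbedding.weaklyLocallyCompactSpace _ _ (t.induced e) t _ e he) hcont'
  calc t = (t.induced e).coinduced e := by
        rw [← e.coinduced_symm, coinduced_compose, e.self_comp_symm, coinduced_id]
    _ = ⊥ := by rw [ht', coinduced_bot]

end Bicyclic

/-- Every Hausdorff locally compact topology on the bicyclic monoid (every point has an
open neighbourhood with compact closure) which is right-continuous (all left translations
continuous) or left-continuous (all right translations continuous) is discrete. -/
theorem bicyclic_discrete_of_locallyCompact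
    (t : TopologicalSpace (ℕ × ℕ))
    (ht2 : @T2Space (ℕ × ℕ) t)
    (hLC : ∀ x : ℕ × ℕ, ∃ U : Set (ℕ × ℕ),
      @IsOpen (ℕ × ℕ) t U ∧ x ∈ U ∧ @IsCompact (ℕ × ℕ) t (@closure (ℕ × ℕ) t U))
    (hshift : (∀ s : ℕ × ℕ, @Continuous (ℕ × ℕ) (ℕ × ℕ) t t (fun x => bmul s x)) ∨
      (∀ s : ℕ × ℕ, @Continuous (ℕ × ℕ) (ℕ × ℕ) t t (fun x => bmul x s))) :
    t = ⊥ := by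
  let _ := t
  have : WeaklyLocallyCompactSpace (ℕ × ℕ) := ⟨fun x => by
    obtain ⟨U, hU, hxU, hUc⟩ := hLC x
    exact ⟨closure U, hUc, mem_of_superset (hU.mem_nhds hxU) subset_closure⟩⟩
  rcases hshift with hL | hR
  · exact Bicyclic.eq_bot_of_continuous_bmul_left hL
  · exact Bicyclic.eq_bot_of_continuous_bmul_right hR
end

section
/- Let p be a prime and m ≤ n natural numbers. The multiplication of the semigroup C₊^{[m,n]}(a,b) is jointly continuous with respect to the topology τ_p^{m,n}; that is, (C₊^{[m,n]}(a,b), τ_p^{m,n}) is a topological semigroup. -/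
/-- The subsemigroup `C₊^{[m,n]}(a,b) = {(i, i+j) : m ≤ i ≤ n, j ∈ ℕ}` of the bicyclic
monoid. -/
def Cmn (m n : ℕ) : Set (ℕ × ℕ) := {x | m ≤ x.1 ∧ x.1 ≤ n ∧ x.1 ≤ x.2}

lemma Cmn.mul_mem {m n : ℕ} {x y : ℕ × ℕ} (hx : x ∈ Cmn m n) (hy : y ∈ Cmn m n) :
    bmul x y ∈ Cmn m n := by
  simp only [Cmn, Set.mem_setOf_eq, bmul] at *
  omega

/-- The topology `τ_p^{m,n}` on `C₊^{[m,n]}(a,b)`, generated by the base consisting of the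
singletons `{(i, i+j)}` for `i + j ≤ n` together with the sets
`V_s(i, i+j) = {(i, i+j+t) : t ∈ p^s·ℕ}` for `i + j > n` and `s ≥ 1`. -/
def tauP (p m n : ℕ) : TopologicalSpace (Cmn m n) :=
  TopologicalSpace.generateFrom
    ({U | ∃ x : Cmn m n, (x : ℕ × ℕ).2 ≤ n ∧ U = {x}} ∪
     {U | ∃ x : Cmn m n, ∃ s : ℕ, 1 ≤ s ∧ n < (x : ℕ × ℕ).2 ∧
        U = {y : Cmn m n | ∃ t : ℕ,
          (y : ℕ × ℕ) = ((x : ℕ × ℕ).1, (x : ℕ × ℕ).2 + p ^ s * t)}})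

/-!
Every point `x = (i, i+j)` has the open neighbourhoods `N_s(x)`, equal to `{x}` when `i + j ≤ n`
and to `V_s(x)` otherwise, and every basic open set containing `x` contains some `N_s(x)`.
Multiplication maps `N_s(x) × N_s(y)` into `N_s(xy)`: the second coordinate of `xy` dominates
those of `x` and `y`, so if `xy` is isolated then so are `x` and `y`; otherwise, since the first
coordinate of `y` is at most `n`, shifting the second coordinates of `x` (when `x` is not
isolated) and of `y` by multiples of `p^s` shifts that of `xy` by their sum.
-/

lemma bmul_shift (x y : ℕ × ℕ) (u v : ℕ) (h : u = 0 ∨ y.1 ≤ x.2) :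
    bmul (x.1, x.2 + u) (y.1, y.2 + v) = ((bmul x y).1, (bmul x y).2 + (u + v)) := by
  simp only [bmul, Prod.mk.injEq]
  omega

lemma snd_le_bmul_snd_left {x y : ℕ × ℕ} (hy : y.1 ≤ y.2) : x.2 ≤ (bmul x y).2 := by
  simp only [bmul]
  omega

lemma snd_le_bmul_snd_right (x y : ℕ × ℕ) : y.2 ≤ (bmul x y).2 := by
  simp only [bmul]
  omega

namespace Cmn

variable {m n : ℕ}

open scoped Topology

instance : Mul (Cmn m n) := ⟨fun x y => ⟨bmul x y, mul_mem x.2 y.2⟩⟩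

@[simp]
lemma coe_mul (x y : Cmn m n) : ((x * y : Cmn m n) : ℕ × ℕ) = bmul x y := rfl

def V (p s : ℕ) (x : Cmn m n) : Set (Cmn m n) :=
  {y | ∃ t : ℕ, (y : ℕ × ℕ) = ((x : ℕ × ℕ).1, (x : ℕ × ℕ).2 + p ^ s * t)}

lemma mem_V_self (p s : ℕ) (x : Cmn m n) : x ∈ V p s x :=
  ⟨0, by simp⟩

lemma isOpen_singleton {p : ℕ} {x : Cmn m n} (hx : (x : ℕ × ℕ).2 ≤ n) :
    IsOpen[tauP p m n] {x} :=
  .basic _ (.inl ⟨x, hx, rfl⟩)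

lemma isOpen_V {p s : ℕ} {x : Cmn m n} (hs : 1 ≤ s) (hx : n < (x : ℕ × ℕ).2) :
    IsOpen[tauP p m n] (V p s x) :=
  .basic _ (.inr ⟨x, s, hs, hx, rfl⟩)

lemma V_subset_V {p s : ℕ} {x y : Cmn m n} (hy : y ∈ V p s x) : V p s y ⊆ V p s x := by
  obtain ⟨t, ht⟩ := hy
  rintro z ⟨u, hu⟩
  refine ⟨t + u, ?_⟩
  rw [hu, ht, mul_add, add_assoc]

lemma snd_le_of_mem_V {p s : ℕ} {x y : Cmn m n} (hy : y ∈ V p s x) :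
    (x : ℕ × ℕ).2 ≤ (y : ℕ × ℕ).2 := by
  obtain ⟨t, ht⟩ := hy
  rw [ht]
  exact Nat.le_add_right _ _

def nbhd (p s : ℕ) (x : Cmn m n) : Set (Cmn m n) :=
  if (x : ℕ × ℕ).2 ≤ n then {x} else V p s x

lemma nbhd_of_le {p s : ℕ} {x : Cmn m n} (hx : (x : ℕ × ℕ).2 ≤ n) : nbhd p s x = {x} :=
  if_pos hx

lemma nbhd_of_lt {p s : ℕ} {x : Cmn m n} (hx : n < (x : ℕ × ℕ).2) : nbhd p s x = V p s x :=
  if_neg hx.not_ge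

lemma mem_nbhd_self (p s : ℕ) (x : Cmn m n) : x ∈ nbhd p s x := by
  unfold nbhd
  split_ifs
  exacts [rfl, mem_V_self p s x]

lemma isOpen_nbhd {p s : ℕ} (hs : 1 ≤ s) (x : Cmn m n) : IsOpen[tauP p m n] (nbhd p s x) := by
  unfold nbhd
  split_ifs with hx
  exacts [isOpen_singleton hx, isOpen_V hs (not_le.mp hx)]

lemma nbhd_subset_V {p s : ℕ} {x w : Cmn m n} (hw : n < (w : ℕ × ℕ).2) (hx : x ∈ V p s w) :
    nbhd p s x ⊆ V p s w := by
  rw [nbhd_of_lt (hw.trans_le (snd_le_of_mem_V hx))]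
  exact V_subset_V hx

lemma exists_eq_of_mem_nbhd {p s : ℕ} {x y : Cmn m n} (hy : y ∈ nbhd p s x) :
    ∃ t : ℕ, (y : ℕ × ℕ) = ((x : ℕ × ℕ).1, (x : ℕ × ℕ).2 + p ^ s * t) ∧
      ((x : ℕ × ℕ).2 ≤ n → t = 0) := by
  rcases le_or_gt (x : ℕ × ℕ).2 n with hx | hx
  · rw [nbhd_of_le hx, Set.mem_singleton_iff] at hy
    exact ⟨0, by simp [hy], fun _ => rfl⟩
  · rw [nbhd_of_lt hx] at hy
    obtain ⟨t, ht⟩ := hy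
    exact ⟨t, ht, fun h => absurd h hx.not_ge⟩

lemma mul_mem_nbhd_mul {p s : ℕ} {x y a b : Cmn m n} (ha : a ∈ nbhd p s x)
    (hb : b ∈ nbhd p s y) : a * b ∈ nbhd p s (x * y) := by
  obtain ⟨-, hy₁n, hy₁₂⟩ := y.2
  rcases le_or_gt ((x * y : Cmn m n) : ℕ × ℕ).2 n with hxy | hxy
  · have hx : (x : ℕ × ℕ).2 ≤ n := (snd_le_bmul_snd_left hy₁₂).trans hxy
    have hy : (y : ℕ × ℕ).2 ≤ n := (snd_le_bmul_snd_right _ _).trans hxy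
    rw [nbhd_of_le hx, Set.mem_singleton_iff] at ha
    rw [nbhd_of_le hy, Set.mem_singleton_iff] at hb
    rw [nbhd_of_le hxy, ha, hb]
    exact Set.mem_singleton _
  · obtain ⟨u, hu, hu₀⟩ := exists_eq_of_mem_nbhd ha
    obtain ⟨v, hv, -⟩ := exists_eq_of_mem_nbhd hb
    have hshift : p ^ s * u = 0 ∨ (y : ℕ × ℕ).1 ≤ (x : ℕ × ℕ).2 := by
      rcases le_or_gt (x : ℕ × ℕ).2 n with hx | hx
      exacts [.inl (by rw [hu₀ hx, mul_zero]), .inr (hy₁n.trans hx.le)]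
    rw [nbhd_of_lt hxy]
    refine ⟨u + v, ?_⟩
    rw [coe_mul, hu, hv, bmul_shift _ _ _ _ hshift, mul_add]
    rfl

end Cmn

theorem tauP_isTopologicalSemigroup_general (p m n : ℕ) :
    @Continuous (Cmn m n × Cmn m n) (Cmn m n)
      (@instTopologicalSpaceProd _ _ (tauP p m n) (tauP p m n)) (tauP p m n)
      (fun z => ⟨bmul (z.1 : ℕ × ℕ) (z.2 : ℕ × ℕ), Cmn.mul_mem z.1.2 z.2.2⟩) := by
  let _ := tauP p m n
  refine continuous_generateFrom_iff.mpr fun U hU => isOpen_prod_iff.mpr fun x y hxy => ?_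
  obtain ⟨s, hs, hsub⟩ : ∃ s, 1 ≤ s ∧ Cmn.nbhd p s (x * y) ⊆ U := by
    rcases hU with ⟨w, hw, rfl⟩ | ⟨w, s, hs, hw, rfl⟩
    · rw [Set.mem_preimage, Set.mem_singleton_iff] at hxy
      rw [← hxy] at hw ⊢
      exact ⟨1, le_rfl, (Cmn.nbhd_of_le hw).subset⟩
    · exact ⟨s, hs, Cmn.nbhd_subset_V hw hxy⟩
  exact ⟨Cmn.nbhd p s x, Cmn.nbhd p s y, Cmn.isOpen_nbhd hs x, Cmn.isOpen_nbhd hs y,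
    Cmn.mem_nbhd_self p s x, Cmn.mem_nbhd_self p s y,
    fun _ ⟨ha, hb⟩ => hsub (Cmn.mul_mem_nbhd_mul ha hb)⟩

/-- For a prime `p` and `m ≤ n`, the multiplication of `C₊^{[m,n]}(a,b)` is jointly
continuous with respect to `τ_p^{m,n}`; i.e. `(C₊^{[m,n]}(a,b), τ_p^{m,n})` is a
topological semigroup. -/
theorem tauP_isTopologicalSemigroup (p m n : ℕ) (hp : p.Prime) (hmn : m ≤ n) :
    @Continuous (Cmn m n × Cmn m n) (Cmn m n)
      (@instTopologicalSpaceProd _ _ (tauP p m n) (tauP p m n)) (tauP p m n)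
      (fun z => ⟨bmul (z.1 : ℕ × ℕ) (z.2 : ℕ × ℕ), Cmn.mul_mem z.1.2 z.2.2⟩) :=
  tauP_isTopologicalSemigroup_general p m n
end
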